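/- arXiv:2410.07134 — 2 statements merged into one kernel-verified Lean document; each statement's English description precedes it below -/
import Mathlib

section
/- Let (u₁, ũ₁) and (u₂, ũ₂) be Golay complementary sequence pairs of lengths L₁ and L₂. Then the arrays U = [u₁u₂ᵀ, -ũ₁ũ₂ᴴE] and Ũ = [u₁ũ₂ᵀ, ũ₁u₂ᴴE] of size L₁ × 2L₂ (horizontal block concatenation) form a Golay complementary array pair with constant 4L₁L₂. -/
/-!
Writing `v = u₂ᴴE` and `ṽ = ũ₂ᴴE` in columns `L₂, …, 2L₂ - 1`, the two arrays are the sums of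
outer products `u₁ ⊗ u₂ + ũ₁ ⊗ (-ṽ)` and `u₁ ⊗ ũ₂ + ũ₁ ⊗ v`, and the 2D autocorrelation of
`x ⊗ p + y ⊗ q` is a sum of four products of 1D cross-correlations. Conjugate reversal
preserves autocorrelations and swaps the two arguments of a cross-correlation, so in the sum
of the two arrays the column factors add up to `R_{u₂} + R_{ũ₂}` on the diagonal terms and
cancel on the mixed ones, leaving `(R_{u₁} + R_{ũ₁}) (R_{u₂} + R_{ũ₂})`.
-/

open scoped BigOperators

/-- 2D aperiodic autocorrelation of an `N₁ × N₂` array `U : ℤ → ℤ → ℂ`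
(supported on `{0,…,N₁-1} × {0,…,N₂-1}`). -/
noncomputable def acf2 (N₁ N₂ : ℕ) (U : ℤ → ℤ → ℂ) (ξ₁ ξ₂ : ℤ) : ℂ :=
  ∑ n₁ ∈ Finset.range N₁, ∑ n₂ ∈ Finset.range N₂,
    U n₁ n₂ * (starRingEnd ℂ) (U (n₁ + ξ₁) (n₂ + ξ₂))

open Finset ComplexConjugate

def IsSupportedIn {M : Type*} [Zero M] (N : ℕ) (x : ℤ → M) : Prop :=
  ∀ n : ℤ, (n < 0 ∨ (N : ℤ) ≤ n) → x n = 0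

noncomputable def ccf (N : ℕ) (x y : ℤ → ℂ) (ξ : ℤ) : ℂ :=
  ∑ n ∈ range N, x n * conj (y (n + ξ))

noncomputable def ccfZ (x y : ℤ → ℂ) (ξ : ℤ) : ℂ :=
  ∑' n : ℤ, x n * conj (y (n + ξ))

/-- `conjReflect (2 * L - 1) x` is the paper's row block `xᴴE`, placed in columns
`L, …, 2L - 1`. -/
def conjReflect (c : ℤ) (x : ℤ → ℂ) : ℤ → ℂ :=
  fun n => conj (x (c - n))

section Support

variable {N L : ℕ} {x : ℤ → ℂ}

theorem IsSupportedIn.mono (hx : IsSupportedIn L x) (h : L ≤ N) :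
    IsSupportedIn N x :=
  fun n hn => hx n (by omega)

theorem IsSupportedIn.neg (hx : IsSupportedIn N x) : IsSupportedIn N (-x) :=
  fun n hn => by simp [hx n hn]

theorem IsSupportedIn.mul_right (hx : IsSupportedIn N x) (g : ℤ → ℂ) :
    IsSupportedIn N (fun n => x n * g n) :=
  fun n hn => by simp [hx n hn]

theorem IsSupportedIn.conjReflect (hx : IsSupportedIn L x) :
    IsSupportedIn (2 * L) (conjReflect (2 * L - 1) x) :=
  fun n hn => by simp [_root_.conjReflect, hx (2 * L - 1 - n) (by push_cast at hn; omega)]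

theorem conjReflect_eq_zero_of_lt (hx : IsSupportedIn L x) {n : ℤ} (hn : n < L) :
    conjReflect (2 * L - 1) x n = 0 := by
  simp [conjReflect, hx (2 * L - 1 - n) (Or.inr (by omega))]

theorem sum_range_eq_tsum_of_isSupportedIn {M : Type*} [AddCommMonoid M] [TopologicalSpace M]
    {f : ℤ → M} (hf : IsSupportedIn N f) : ∑ n ∈ range N, f n = ∑' n : ℤ, f n := by
  rw [tsum_eq_sum (s := (range N).map ⟨Nat.cast, Nat.cast_injective⟩) fun n hn => ?_,
    sum_map]
  · rfl
  · refine hf n (by_contra fun h => hn ?_)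
    simp only [mem_map, mem_range, Function.Embedding.coeFn_mk]
    exact ⟨n.toNat, by omega, by omega⟩

theorem ccf_eq_ccfZ (hx : IsSupportedIn N x) (y : ℤ → ℂ) (ξ : ℤ) : ccf N x y ξ = ccfZ x y ξ :=
  sum_range_eq_tsum_of_isSupportedIn (hx.mul_right fun n => conj (y (n + ξ)))

end Support

section Reflection

variable (c : ℤ) (x y : ℤ → ℂ) (ξ : ℤ)

theorem ccfZ_neg_left : ccfZ (-x) y ξ = -ccfZ x y ξ := by
  simp [ccfZ, tsum_neg]

theorem ccfZ_neg_right : ccfZ x (-y) ξ = -ccfZ x y ξ := by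
  simp [ccfZ, tsum_neg]

theorem ccfZ_conjReflect : ccfZ (conjReflect c x) (conjReflect c y) ξ = ccfZ y x ξ := by
  rw [ccfZ, ← (Equiv.subLeft (c - ξ)).tsum_eq]
  refine tsum_congr fun n => ?_
  simp only [conjReflect, Equiv.subLeft_apply, Complex.conj_conj]
  rw [show c - (c - ξ - n) = n + ξ by ring, show c - (c - ξ - n + ξ) = n by ring, mul_comm]

theorem ccfZ_conjReflect_right :
    ccfZ x (conjReflect c y) ξ = ccfZ y (conjReflect c x) ξ := by
  rw [ccfZ, ← (Equiv.subLeft (c - ξ)).tsum_eq]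
  refine tsum_congr fun n => ?_
  simp only [conjReflect, Equiv.subLeft_apply, Complex.conj_conj]
  rw [show c - (c - ξ - n + ξ) = n by ring, show c - (n + ξ) = c - ξ - n by ring, mul_comm]

theorem ccfZ_conjReflect_left :
    ccfZ (conjReflect c x) y ξ = ccfZ (conjReflect c y) x ξ := by
  rw [ccfZ, ← (Equiv.subLeft (c - ξ)).tsum_eq]
  refine tsum_congr fun n => ?_
  simp only [conjReflect, Equiv.subLeft_apply]
  rw [show c - (c - ξ - n) = n + ξ by ring, show c - ξ - n + ξ = c - n by ring, mul_comm]

end Reflection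

theorem acf2_add_separable (N₁ N₂ : ℕ) (x y p q : ℤ → ℂ) (ξ₁ ξ₂ : ℤ) :
    acf2 N₁ N₂ (fun n₁ n₂ => x n₁ * p n₂ + y n₁ * q n₂) ξ₁ ξ₂ =
      ccf N₁ x x ξ₁ * ccf N₂ p p ξ₂ + ccf N₁ x y ξ₁ * ccf N₂ p q ξ₂ +
        ccf N₁ y x ξ₁ * ccf N₂ q p ξ₂ + ccf N₁ y y ξ₁ * ccf N₂ q q ξ₂ := by
  simp only [acf2, ccf, sum_mul_sum, ← sum_add_distrib]
  refine sum_congr rfl fun n₁ _ => sum_congr rfl fun n₂ _ => ?_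
  simp only [map_add, map_mul]
  ring

theorem acf2_add_acf2_separable {N₁ N₂ : ℕ} {x y p q p' q' : ℤ → ℂ} {ξ₁ ξ₂ : ℤ} {S : ℂ}
    (hp : ccf N₂ p p ξ₂ + ccf N₂ p' p' ξ₂ = S) (hq : ccf N₂ q q ξ₂ + ccf N₂ q' q' ξ₂ = S)
    (hpq : ccf N₂ p q ξ₂ + ccf N₂ p' q' ξ₂ = 0) (hqp : ccf N₂ q p ξ₂ + ccf N₂ q' p' ξ₂ = 0) :
    acf2 N₁ N₂ (fun n₁ n₂ => x n₁ * p n₂ + y n₁ * q n₂) ξ₁ ξ₂ +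
        acf2 N₁ N₂ (fun n₁ n₂ => x n₁ * p' n₂ + y n₁ * q' n₂) ξ₁ ξ₂ =
      (ccf N₁ x x ξ₁ + ccf N₁ y y ξ₁) * S := by
  rw [acf2_add_separable, acf2_add_separable]
  linear_combination ccf N₁ x x ξ₁ * hp + ccf N₁ y y ξ₁ * hq + ccf N₁ x y ξ₁ * hpq +
    ccf N₁ y x ξ₁ * hqp

theorem acf2_add_acf2_conjReflect {N₁ L : ℕ} {u ut : ℤ → ℂ} (hu : IsSupportedIn L u)
    (hut : IsSupportedIn L ut) (x y : ℤ → ℂ) (ξ₁ ξ₂ : ℤ) :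
    acf2 N₁ (2 * L)
        (fun n₁ n₂ => x n₁ * u n₂ + y n₁ * (-conjReflect (2 * L - 1) ut) n₂) ξ₁ ξ₂ +
      acf2 N₁ (2 * L)
        (fun n₁ n₂ => x n₁ * ut n₂ + y n₁ * conjReflect (2 * L - 1) u n₂) ξ₁ ξ₂ =
      (ccf N₁ x x ξ₁ + ccf N₁ y y ξ₁) * (ccf L u u ξ₂ + ccf L ut ut ξ₂) := by
  have hu₂ := hu.mono (by omega : L ≤ 2 * L)
  have hut₂ := hut.mono (by omega : L ≤ 2 * L)
  refine acf2_add_acf2_separable ?_ ?_ ?_ ?_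
  · rw [ccf_eq_ccfZ hu, ccf_eq_ccfZ hut, ccf_eq_ccfZ hu₂, ccf_eq_ccfZ hut₂]
  · rw [ccf_eq_ccfZ hut.conjReflect.neg, ccf_eq_ccfZ hu.conjReflect, ccfZ_neg_left,
      ccfZ_neg_right, neg_neg, ccfZ_conjReflect, ccfZ_conjReflect, ccf_eq_ccfZ hu,
      ccf_eq_ccfZ hut, add_comm]
  · rw [ccf_eq_ccfZ hu₂, ccf_eq_ccfZ hut₂, ccfZ_neg_right, ccfZ_conjReflect_right,
      neg_add_cancel]
  · rw [ccf_eq_ccfZ hut.conjReflect.neg, ccf_eq_ccfZ hu.conjReflect, ccfZ_neg_left,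
      ccfZ_conjReflect_left, neg_add_cancel]

theorem golay_array_from_seq_horiz_general (L₁ L₂ : ℕ) (u₁ ut₁ u₂ ut₂ : ℤ → ℂ)
    (hsu₂ : ∀ n : ℤ, (n < 0 ∨ (L₂ : ℤ) ≤ n) → u₂ n = 0)
    (hsut₂ : ∀ n : ℤ, (n < 0 ∨ (L₂ : ℤ) ≤ n) → ut₂ n = 0)
    (hG₁ : ∀ ξ : ℤ,
      (∑ n ∈ Finset.range L₁, u₁ n * (starRingEnd ℂ) (u₁ (n + ξ))) +
        (∑ n ∈ Finset.range L₁, ut₁ n * (starRingEnd ℂ) (ut₁ (n + ξ))) =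
      if ξ = 0 then (2 * L₁ : ℂ) else 0)
    (hG₂ : ∀ ξ : ℤ,
      (∑ n ∈ Finset.range L₂, u₂ n * (starRingEnd ℂ) (u₂ (n + ξ))) +
        (∑ n ∈ Finset.range L₂, ut₂ n * (starRingEnd ℂ) (ut₂ (n + ξ))) =
      if ξ = 0 then (2 * L₂ : ℂ) else 0) :
    ∀ ξ₁ ξ₂ : ℤ,
      acf2 L₁ (2 * L₂)
          (fun n₁ n₂ => if n₂ < (L₂ : ℤ) then u₁ n₁ * u₂ n₂
            else -(ut₁ n₁ * (starRingEnd ℂ) (ut₂ (2 * (L₂ : ℤ) - 1 - n₂)))) ξ₁ ξ₂ +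
        acf2 L₁ (2 * L₂)
          (fun n₁ n₂ => if n₂ < (L₂ : ℤ) then u₁ n₁ * ut₂ n₂
            else ut₁ n₁ * (starRingEnd ℂ) (u₂ (2 * (L₂ : ℤ) - 1 - n₂))) ξ₁ ξ₂ =
      if ξ₁ = 0 ∧ ξ₂ = 0 then (4 * L₁ * L₂ : ℂ) else 0 := by
  intro ξ₁ ξ₂
  have hU : (fun n₁ n₂ : ℤ => if n₂ < (L₂ : ℤ) then u₁ n₁ * u₂ n₂
      else -(ut₁ n₁ * conj (ut₂ (2 * (L₂ : ℤ) - 1 - n₂)))) =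
      fun n₁ n₂ => u₁ n₁ * u₂ n₂ + ut₁ n₁ * (-conjReflect (2 * L₂ - 1) ut₂) n₂ := by
    funext n₁ n₂
    split_ifs with h
    · simp [conjReflect_eq_zero_of_lt hsut₂ h]
    · simp [hsu₂ n₂ (Or.inr (not_lt.1 h)), conjReflect]
  have hUt : (fun n₁ n₂ : ℤ => if n₂ < (L₂ : ℤ) then u₁ n₁ * ut₂ n₂
      else ut₁ n₁ * conj (u₂ (2 * (L₂ : ℤ) - 1 - n₂))) =
      fun n₁ n₂ => u₁ n₁ * ut₂ n₂ + ut₁ n₁ * conjReflect (2 * L₂ - 1) u₂ n₂ := by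
    funext n₁ n₂
    split_ifs with h
    · simp [conjReflect_eq_zero_of_lt hsu₂ h]
    · simp [hsut₂ n₂ (Or.inr (not_lt.1 h)), conjReflect]
  rw [hU, hUt, acf2_add_acf2_conjReflect hsu₂ hsut₂]
  simp only [ccf]
  rw [hG₁, hG₂, ite_zero_mul_ite_zero]
  congr 1
  ring

/-- Horizontal-concatenation construction of a Golay complementary array pair from two
Golay complementary sequence pairs (Proposition 2, construction (25)). -/
theorem golay_array_from_seq_horiz (L₁ L₂ : ℕ) (u₁ ut₁ u₂ ut₂ : ℤ → ℂ)
    (hsu₁ : ∀ n : ℤ, (n < 0 ∨ (L₁ : ℤ) ≤ n) → u₁ n = 0)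
    (hsut₁ : ∀ n : ℤ, (n < 0 ∨ (L₁ : ℤ) ≤ n) → ut₁ n = 0)
    (hsu₂ : ∀ n : ℤ, (n < 0 ∨ (L₂ : ℤ) ≤ n) → u₂ n = 0)
    (hsut₂ : ∀ n : ℤ, (n < 0 ∨ (L₂ : ℤ) ≤ n) → ut₂ n = 0)
    (hmu₁ : ∀ n : ℤ, 0 ≤ n → n < (L₁ : ℤ) → ‖u₁ n‖ = 1)
    (hmut₁ : ∀ n : ℤ, 0 ≤ n → n < (L₁ : ℤ) → ‖ut₁ n‖ = 1)
    (hmu₂ : ∀ n : ℤ, 0 ≤ n → n < (L₂ : ℤ) → ‖u₂ n‖ = 1)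
    (hmut₂ : ∀ n : ℤ, 0 ≤ n → n < (L₂ : ℤ) → ‖ut₂ n‖ = 1)
    (hG₁ : ∀ ξ : ℤ,
      (∑ n ∈ Finset.range L₁, u₁ n * (starRingEnd ℂ) (u₁ (n + ξ))) +
        (∑ n ∈ Finset.range L₁, ut₁ n * (starRingEnd ℂ) (ut₁ (n + ξ))) =
      if ξ = 0 then (2 * L₁ : ℂ) else 0)
    (hG₂ : ∀ ξ : ℤ,
      (∑ n ∈ Finset.range L₂, u₂ n * (starRingEnd ℂ) (u₂ (n + ξ))) +
        (∑ n ∈ Finset.range L₂, ut₂ n * (starRingEnd ℂ) (ut₂ (n + ξ))) =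
      if ξ = 0 then (2 * L₂ : ℂ) else 0) :
    ∀ ξ₁ ξ₂ : ℤ,
      acf2 L₁ (2 * L₂)
          (fun n₁ n₂ => if n₂ < (L₂ : ℤ) then u₁ n₁ * u₂ n₂
            else -(ut₁ n₁ * (starRingEnd ℂ) (ut₂ (2 * (L₂ : ℤ) - 1 - n₂)))) ξ₁ ξ₂ +
        acf2 L₁ (2 * L₂)
          (fun n₁ n₂ => if n₂ < (L₂ : ℤ) then u₁ n₁ * ut₂ n₂
            else ut₁ n₁ * (starRingEnd ℂ) (u₂ (2 * (L₂ : ℤ) - 1 - n₂))) ξ₁ ξ₂ =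
      if ξ₁ = 0 ∧ ξ₂ = 0 then (4 * L₁ * L₂ : ℂ) else 0 :=
  golay_array_from_seq_horiz_general L₁ L₂ u₁ ut₁ u₂ ut₂ hsu₂ hsut₂ hG₁ hG₂
end

section
/- Let (U₁, Ũ₁) be a Golay complementary array pair of size L₁×J₁ and (U₂, Ũ₂) a Golay complementary array pair of size L₂×J₂. Then W = [U₁⊗U₂; -Ũ₁⊗(E_{L₂}Ũ₂*E_{J₂})] and W̃ = [U₁⊗Ũ₂; Ũ₁⊗(E_{L₂}U₂*E_{J₂})] of size 2L₁L₂ × J₁J₂ form a Golay complementary array pair. -/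
/-!
Write `W = [A; -B]` and `W̃ = [C; D]`. The autocorrelation of a two-block array is the sum of the
autocorrelations of its blocks plus the two cross-correlations of the blocks at row offsets
`∓ L₁L₂`. These cross terms cancel between `W` and `W̃`: the correlation of Kronecker products
factors block-wise, and cross-correlating against a conjugate reversal is symmetric,
`ccf(X, E Y* E) = ccf(Y, E X* E)`. Since conjugate reversal also preserves autocorrelations, what
remains is `∑ (acf U₁ + acf Ũ₁)(σ) · (acf U₂ + acf Ũ₂)(ρ)` over the (at most two per axis) ways of
writing the shift as `L₂ σ + ρ`, `J₂ σ' + ρ'` with `|ρ| < L₂`, `|ρ'| < J₂`; the Golay hypotheses make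
this `2L₁J₁ · 2L₂J₂` at the zero shift and `0` elsewhere.
-/

open scoped BigOperators

/-- Kronecker product of arrays, where the second factor has p rows and q columns. -/
noncomputable def kron (p q : ℕ) (A B : ℤ → ℤ → ℂ) : ℤ → ℤ → ℂ :=
  fun n₁ n₂ => A (n₁ / (p : ℤ)) (n₂ / (q : ℤ)) * B (n₁ % (p : ℤ)) (n₂ % (q : ℤ))

open Finset ComplexConjugate

noncomputable def ccf2 (N₁ N₂ : ℕ) (X Y : ℤ → ℤ → ℂ) (ξ₁ ξ₂ : ℤ) : ℂ :=
  ∑ n₁ ∈ range N₁, ∑ n₂ ∈ range N₂, X n₁ n₂ * conj (Y (n₁ + ξ₁) (n₂ + ξ₂))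

theorem acf2_eq_ccf2 (N₁ N₂ : ℕ) (U : ℤ → ℤ → ℂ) : acf2 N₁ N₂ U = ccf2 N₁ N₂ U U := rfl

def SupportedIn (N₁ N₂ : ℕ) (X : ℤ → ℤ → ℂ) : Prop :=
  ∀ n₁ n₂ : ℤ, (n₁ < 0 ∨ (N₁ : ℤ) ≤ n₁ ∨ n₂ < 0 ∨ (N₂ : ℤ) ≤ n₂) → X n₁ n₂ = 0

/-- `E_{N₁} Y* E_{N₂}` of the paper, for `Y` supported in `N₁ × N₂`. -/
noncomputable def conjReverse (N₁ N₂ : ℕ) (Y : ℤ → ℤ → ℂ) : ℤ → ℤ → ℂ :=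
  fun n₁ n₂ => conj (Y ((N₁ : ℤ) - 1 - n₁) ((N₂ : ℤ) - 1 - n₂))

/-- The block array `[A; B]`, where `A` has `M` rows. -/
def stackRows (M : ℕ) (A B : ℤ → ℤ → ℂ) : ℤ → ℤ → ℂ :=
  fun n₁ n₂ => if n₁ < (M : ℤ) then A n₁ n₂ else B (n₁ - M) n₂

section

variable {N₁ N₂ : ℕ} {X Y : ℤ → ℤ → ℂ}

theorem conjReverse_conjReverse :
    conjReverse N₁ N₂ (conjReverse N₁ N₂ Y) = Y := by
  funext n₁ n₂
  simp [conjReverse]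

theorem ccf2_neg_left (ξ₁ ξ₂ : ℤ) :
    ccf2 N₁ N₂ (-X) Y ξ₁ ξ₂ = -ccf2 N₁ N₂ X Y ξ₁ ξ₂ := by
  simp [ccf2]

theorem ccf2_neg_right (ξ₁ ξ₂ : ℤ) :
    ccf2 N₁ N₂ X (-Y) ξ₁ ξ₂ = -ccf2 N₁ N₂ X Y ξ₁ ξ₂ := by
  simp [ccf2]

namespace SupportedIn

theorem neg (hX : SupportedIn N₁ N₂ X) : SupportedIn N₁ N₂ (-X) := fun n₁ n₂ hn => by
  simp [hX n₁ n₂ hn]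

theorem conjReverse (hX : SupportedIn N₁ N₂ X) : SupportedIn N₁ N₂ (conjReverse N₁ N₂ X) :=
  fun n₁ n₂ hn => by rw [_root_.conjReverse, hX _ _ (by omega), map_zero]

theorem kron {L J p q : ℕ} {P Q : ℤ → ℤ → ℂ} (hP : SupportedIn L J P) (hQ : SupportedIn p q Q) :
    SupportedIn (L * p) (J * q) (kron p q P Q) := by
  intro n₁ n₂ hn
  rcases Nat.eq_zero_or_pos p with rfl | hp
  · rw [_root_.kron, hQ _ _ (by omega), mul_zero]
  rcases Nat.eq_zero_or_pos q with rfl | hq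
  · rw [_root_.kron, hQ _ _ (by omega), mul_zero]
  have hp' : (0 : ℤ) < p := by exact_mod_cast hp
  have hq' : (0 : ℤ) < q := by exact_mod_cast hq
  refine mul_eq_zero_of_left (hP _ _ ?_) _
  rw [Int.ediv_lt_iff_lt_mul hp', Int.le_ediv_iff_mul_le hp', Int.ediv_lt_iff_lt_mul hq',
    Int.le_ediv_iff_mul_le hq']
  push_cast at hn
  omega

end SupportedIn

theorem ccf2_eq_finsum (hX : SupportedIn N₁ N₂ X) (ξ₁ ξ₂ : ℤ) :
    ccf2 N₁ N₂ X Y ξ₁ ξ₂ = ∑ᶠ n : ℤ × ℤ, X n.1 n.2 * conj (Y (n.1 + ξ₁) (n.2 + ξ₂)) := by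
  let e : ℕ × ℕ → ℤ × ℤ := fun n => (n.1, n.2)
  have he : Set.InjOn e ↑(range N₁ ×ˢ range N₂) := fun a _ b _ h => by
    simp only [e, Prod.mk.injEq, Nat.cast_inj] at h
    exact Prod.ext h.1 h.2
  rw [finsum_eq_sum_of_support_subset _ (s := (range N₁ ×ˢ range N₂).image e), sum_image he,
    sum_product]
  · rfl
  intro n hn
  have hXn : X n.1 n.2 ≠ 0 := left_ne_zero_of_mul hn
  have hbox : 0 ≤ n.1 ∧ n.1 < N₁ ∧ 0 ≤ n.2 ∧ n.2 < N₂ := by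
    by_contra h
    exact hXn (hX _ _ (by omega))
  simp only [coe_image, coe_product, coe_range, Set.mem_image, Set.mem_prod, Set.mem_Iio]
  exact ⟨(n.1.toNat, n.2.toNat), ⟨by omega, by omega⟩,
    Prod.ext (Int.toNat_of_nonneg hbox.1) (Int.toNat_of_nonneg hbox.2.2.1)⟩

/-- Both sides are `∑ n : ℤ × ℤ, X n * Y (c - n)` with `c = (N₁ - 1 - ξ₁, N₂ - 1 - ξ₂)`. -/
theorem ccf2_conjReverse_comm (hX : SupportedIn N₁ N₂ X) (hY : SupportedIn N₁ N₂ Y)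
    (ξ₁ ξ₂ : ℤ) :
    ccf2 N₁ N₂ X (conjReverse N₁ N₂ Y) ξ₁ ξ₂ = ccf2 N₁ N₂ Y (conjReverse N₁ N₂ X) ξ₁ ξ₂ := by
  let c : ℤ × ℤ := ((N₁ : ℤ) - 1 - ξ₁, (N₂ : ℤ) - 1 - ξ₂)
  have h : ∀ {A B : ℤ → ℤ → ℂ}, SupportedIn N₁ N₂ A →
      ccf2 N₁ N₂ A (conjReverse N₁ N₂ B) ξ₁ ξ₂ =
        ∑ᶠ n : ℤ × ℤ, A n.1 n.2 * B (c - n).1 (c - n).2 := by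
    intro A B hA
    rw [ccf2_eq_finsum hA]
    congr 1 with n
    simp only [conjReverse, Complex.conj_conj, Prod.fst_sub, Prod.snd_sub, c]
    ring_nf
  rw [h hX, h hY, ← finsum_comp_equiv (Equiv.subLeft c)]
  congr 1 with n
  simp [mul_comm]

theorem ccf2_conjReverse_self (hY : SupportedIn N₁ N₂ Y) (ξ₁ ξ₂ : ℤ) :
    ccf2 N₁ N₂ (conjReverse N₁ N₂ Y) (conjReverse N₁ N₂ Y) ξ₁ ξ₂ = ccf2 N₁ N₂ Y Y ξ₁ ξ₂ := by
  rw [ccf2_conjReverse_comm hY.conjReverse hY, conjReverse_conjReverse]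

theorem ccf2_conjReverse_left_comm (hX : SupportedIn N₁ N₂ X) (hY : SupportedIn N₁ N₂ Y)
    (ξ₁ ξ₂ : ℤ) :
    ccf2 N₁ N₂ (conjReverse N₁ N₂ X) Y ξ₁ ξ₂ = ccf2 N₁ N₂ (conjReverse N₁ N₂ Y) X ξ₁ ξ₂ := by
  simpa only [conjReverse_conjReverse] using
    ccf2_conjReverse_comm hX.conjReverse hY.conjReverse ξ₁ ξ₂

end

section

variable {M N : ℕ} {C D : ℤ → ℤ → ℂ}

theorem stackRows_eq_add (hC : SupportedIn M N C) (hD : SupportedIn M N D) (n₁ n₂ : ℤ) :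
    stackRows M C D n₁ n₂ = C n₁ n₂ + D (n₁ - M) n₂ := by
  unfold stackRows
  split_ifs
  · rw [hD _ _ (by omega), add_zero]
  · rw [hC _ _ (by omega), zero_add]

theorem ccf2_stackRows (hC : SupportedIn M N C) (hD : SupportedIn M N D) (A B : ℤ → ℤ → ℂ)
    (ξ₁ ξ₂ : ℤ) :
    ccf2 (2 * M) N (stackRows M A B) (stackRows M C D) ξ₁ ξ₂ =
      ccf2 M N A C ξ₁ ξ₂ + ccf2 M N B D ξ₁ ξ₂ + ccf2 M N A D (ξ₁ - M) ξ₂ +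
        ccf2 M N B C (ξ₁ + M) ξ₂ := by
  have top : ∀ n₁ ∈ range M, ∀ n₂ : ℕ,
      stackRows M A B n₁ n₂ * conj (stackRows M C D (n₁ + ξ₁) (n₂ + ξ₂)) =
        A n₁ n₂ * conj (C (n₁ + ξ₁) (n₂ + ξ₂)) +
          A n₁ n₂ * conj (D (n₁ + (ξ₁ - M)) (n₂ + ξ₂)) := by
    intro n₁ hn₁ n₂
    rw [mem_range] at hn₁
    rw [stackRows_eq_add hC hD, stackRows, if_pos (by omega), map_add, mul_add, add_sub_assoc]
  have bottom : ∀ n₁ ∈ range M, ∀ n₂ : ℕ,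
      stackRows M A B ↑(M + n₁) n₂ * conj (stackRows M C D (↑(M + n₁) + ξ₁) (n₂ + ξ₂)) =
        B n₁ n₂ * conj (D (n₁ + ξ₁) (n₂ + ξ₂)) +
          B n₁ n₂ * conj (C (n₁ + (ξ₁ + M)) (n₂ + ξ₂)) := by
    intro n₁ _ n₂
    rw [stackRows_eq_add hC hD, stackRows, if_neg (by omega), map_add, mul_add, add_comm]
    push_cast
    ring_nf
  simp only [ccf2, two_mul, sum_range_add]
  rw [sum_congr rfl fun n₁ h => sum_congr rfl fun n₂ _ => top n₁ h n₂,
    sum_congr rfl fun n₁ h => sum_congr rfl fun n₂ _ => bottom n₁ h n₂]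
  simp only [sum_add_distrib]
  ring

end

theorem sum_range_mul (L p : ℕ) {β : Type*} [AddCommMonoid β] (f : ℕ → β) :
    ∑ n ∈ range (L * p), f n = ∑ a ∈ range L, ∑ b ∈ range p, f (p * a + b) := by
  induction L with
  | zero => simp
  | succ L ih => rw [Nat.succ_mul, sum_range_add, ih, sum_range_succ, mul_comm p L]

/-- Only the summand with `i = 0` (if `b + ξ % p < p`) or with `i = 1` (if there is a carry)
survives. -/
theorem apply_div_mod_add_eq_sum {β : Type*} [AddCommMonoid β] {p : ℕ} {a b : ℤ} (hb₀ : 0 ≤ b)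
    (hb : b < p) (ξ : ℤ) (G : ℤ → ℤ → β) (hG : ∀ a' b', b' < 0 ∨ (p : ℤ) ≤ b' → G a' b' = 0) :
    G ((p * a + b + ξ) / p) ((p * a + b + ξ) % p) =
      ∑ i ∈ range 2, G (a + (ξ / p + i)) (b + (ξ % p - p * i)) := by
  have hp : (0 : ℤ) < p := by omega
  have hξ := Int.emod_add_mul_ediv ξ p
  have := Int.emod_nonneg ξ hp.ne'
  have := Int.emod_lt_of_pos ξ hp
  simp only [sum_range_succ, sum_range_zero, zero_add, Nat.cast_zero, Nat.cast_one, mul_zero,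
    sub_zero, add_zero, mul_one]
  by_cases h : b + ξ % p < p
  · obtain ⟨hdiv, hmod⟩ := (Int.ediv_emod_unique hp).2
      ⟨show b + ξ % p + p * (a + ξ / p) = p * a + b + ξ by linear_combination hξ, by omega, h⟩
    rw [hdiv, hmod, hG _ (b + (ξ % p - p)) (by omega), add_zero]
  · obtain ⟨hdiv, hmod⟩ := (Int.ediv_emod_unique hp).2
      ⟨show b + (ξ % p - p) + p * (a + (ξ / p + 1)) = p * a + b + ξ by linear_combination hξ,
        by omega, by omega⟩
    rw [hdiv, hmod, hG _ (b + ξ % p) (by omega), zero_add]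

theorem kron_mul_add {p q : ℕ} (P Q : ℤ → ℤ → ℂ) {a b c d : ℤ} (hb₀ : 0 ≤ b) (hb : b < p)
    (hd₀ : 0 ≤ d) (hd : d < q) :
    kron p q P Q (p * a + b) (q * c + d) = P a c * Q b d := by
  obtain ⟨h₁, h₂⟩ := (Int.ediv_emod_unique (b := p) (by omega)).2 ⟨add_comm _ _, hb₀, hb⟩
  obtain ⟨h₃, h₄⟩ := (Int.ediv_emod_unique (b := q) (by omega)).2 ⟨add_comm _ _, hd₀, hd⟩
  rw [kron, h₁, h₂, h₃, h₄]

theorem kron_mul_add_add {p q : ℕ} (P Q : ℤ → ℤ → ℂ) (hQ : SupportedIn p q Q) {a b c d : ℤ}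
    (hb₀ : 0 ≤ b) (hb : b < p) (hd₀ : 0 ≤ d) (hd : d < q) (ξ₁ ξ₂ : ℤ) :
    kron p q P Q (p * a + b + ξ₁) (q * c + d + ξ₂) =
      ∑ i ∈ range 2, ∑ j ∈ range 2,
        P (a + (ξ₁ / p + i)) (c + (ξ₂ / q + j)) *
          Q (b + (ξ₁ % p - p * i)) (d + (ξ₂ % q - q * j)) := by
  refine (apply_div_mod_add_eq_sum hb₀ hb ξ₁
    (fun x y => P x ((q * c + d + ξ₂) / q) * Q y ((q * c + d + ξ₂) % q))
    fun x y hy => by rw [hQ _ _ (by omega), mul_zero]).trans (sum_congr rfl fun i _ => ?_)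
  exact apply_div_mod_add_eq_sum hd₀ hd ξ₂
    (fun x y => P (a + (ξ₁ / p + i)) x * Q (b + (ξ₁ % p - p * i)) y)
    fun x y hy => by rw [hQ _ _ (by omega), mul_zero]

theorem ccf2_kron {L J p q : ℕ} (P P' Q Q' : ℤ → ℤ → ℂ) (hQ' : SupportedIn p q Q') (ξ₁ ξ₂ : ℤ) :
    ccf2 (L * p) (J * q) (kron p q P Q) (kron p q P' Q') ξ₁ ξ₂ =
      ∑ i ∈ range 2, ∑ j ∈ range 2,
        ccf2 L J P P' (ξ₁ / p + i) (ξ₂ / q + j) *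
          ccf2 p q Q Q' (ξ₁ % p - p * i) (ξ₂ % q - q * j) := by
  have term : ∀ a ∈ range L, ∀ b ∈ range p, ∀ c ∈ range J, ∀ d ∈ range q,
      kron p q P Q ↑(p * a + b) ↑(q * c + d) *
          conj (kron p q P' Q' (↑(p * a + b) + ξ₁) (↑(q * c + d) + ξ₂)) =
        ∑ i ∈ range 2, ∑ j ∈ range 2,
          P a c * conj (P' (a + (ξ₁ / p + i)) (c + (ξ₂ / q + j))) *
            (Q b d * conj (Q' (b + (ξ₁ % p - p * i)) (d + (ξ₂ % q - q * j)))) := by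
    intro a _ b hb c _ d hd
    rw [mem_range] at hb hd
    push_cast
    rw [kron_mul_add P Q (by omega) (by omega) (by omega) (by omega),
      kron_mul_add_add P' Q' hQ' (by omega) (by omega) (by omega) (by omega)]
    simp only [map_sum, map_mul, mul_sum]
    exact sum_congr rfl fun i _ => sum_congr rfl fun j _ => by ring
  simp only [ccf2, sum_range_mul]
  rw [sum_congr rfl fun a ha => sum_congr rfl fun b hb => sum_congr rfl fun c hc =>
    sum_congr rfl fun d hd => term a ha b hb c hc d hd]
  simp only [sum_mul_sum, sum_comm (s := range q) (t := range 2),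
    sum_comm (s := range J) (t := range 2), sum_comm (s := range p) (t := range 2),
    sum_comm (s := range L) (t := range 2)]

theorem ccf2_kron_conjReverse {L J p q : ℕ} (P P' : ℤ → ℤ → ℂ) {Y Y' : ℤ → ℤ → ℂ}
    (hY : SupportedIn p q Y) (hY' : SupportedIn p q Y') (ξ₁ ξ₂ : ℤ) :
    ccf2 (L * p) (J * q) (kron p q P Y) (kron p q P' (conjReverse p q Y')) ξ₁ ξ₂ =
      ccf2 (L * p) (J * q) (kron p q P Y') (kron p q P' (conjReverse p q Y)) ξ₁ ξ₂ := by
  simp only [ccf2_kron _ _ _ _ hY'.conjReverse, ccf2_kron _ _ _ _ hY.conjReverse,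
    ccf2_conjReverse_comm hY hY']

theorem ccf2_kron_conjReverse_left {L J p q : ℕ} (P P' : ℤ → ℤ → ℂ) {Y Y' : ℤ → ℤ → ℂ}
    (hY : SupportedIn p q Y) (hY' : SupportedIn p q Y') (ξ₁ ξ₂ : ℤ) :
    ccf2 (L * p) (J * q) (kron p q P (conjReverse p q Y)) (kron p q P' Y') ξ₁ ξ₂ =
      ccf2 (L * p) (J * q) (kron p q P (conjReverse p q Y')) (kron p q P' Y) ξ₁ ξ₂ := by
  simp only [ccf2_kron _ _ _ _ hY', ccf2_kron _ _ _ _ hY, ccf2_conjReverse_left_comm hY hY']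

theorem acf2_add_acf2_stackRows_kron {L₁ J₁ L₂ J₂ : ℕ} {U₁ Ut₁ U₂ Ut₂ : ℤ → ℤ → ℂ}
    (hU₁ : SupportedIn L₁ J₁ U₁) (hUt₁ : SupportedIn L₁ J₁ Ut₁)
    (hU₂ : SupportedIn L₂ J₂ U₂) (hUt₂ : SupportedIn L₂ J₂ Ut₂) (ξ₁ ξ₂ : ℤ) :
    acf2 (2 * (L₁ * L₂)) (J₁ * J₂) (stackRows (L₁ * L₂) (kron L₂ J₂ U₁ U₂)
        (-kron L₂ J₂ Ut₁ (conjReverse L₂ J₂ Ut₂))) ξ₁ ξ₂ +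
      acf2 (2 * (L₁ * L₂)) (J₁ * J₂) (stackRows (L₁ * L₂) (kron L₂ J₂ U₁ Ut₂)
        (kron L₂ J₂ Ut₁ (conjReverse L₂ J₂ U₂))) ξ₁ ξ₂ =
    ∑ i ∈ range 2, ∑ j ∈ range 2,
      (acf2 L₁ J₁ U₁ (ξ₁ / L₂ + i) (ξ₂ / J₂ + j) + acf2 L₁ J₁ Ut₁ (ξ₁ / L₂ + i) (ξ₂ / J₂ + j)) *
        (acf2 L₂ J₂ U₂ (ξ₁ % L₂ - L₂ * i) (ξ₂ % J₂ - J₂ * j) +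
          acf2 L₂ J₂ Ut₂ (ξ₁ % L₂ - L₂ * i) (ξ₂ % J₂ - J₂ * j)) := by
  simp only [acf2_eq_ccf2]
  rw [ccf2_stackRows (hU₁.kron hU₂) (hUt₁.kron hUt₂.conjReverse).neg,
    ccf2_stackRows (hU₁.kron hUt₂) (hUt₁.kron hU₂.conjReverse)]
  simp only [ccf2_neg_left, ccf2_neg_right, neg_neg, ccf2_kron_conjReverse _ _ hU₂ hUt₂,
    ccf2_kron_conjReverse_left _ _ hUt₂ hU₂]
  simp only [ccf2_kron _ _ _ _ hU₂, ccf2_kron _ _ _ _ hUt₂, ccf2_kron _ _ _ _ hU₂.conjReverse,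
    ccf2_kron _ _ _ _ hUt₂.conjReverse, ccf2_conjReverse_self hU₂, ccf2_conjReverse_self hUt₂,
    ← sum_neg_distrib, ← sum_add_distrib]
  exact sum_congr rfl fun i _ => sum_congr rfl fun j _ => by ring

theorem div_add_eq_zero_and_mod_sub_eq_zero_iff {p i : ℕ} (hi : i < 2) (ξ : ℤ) :
    ξ / p + i = 0 ∧ ξ % p - p * i = 0 ↔ i = 0 ∧ ξ = 0 := by
  rcases Nat.eq_zero_or_pos p with rfl | hp
  · simp only [Nat.cast_zero, Int.ediv_zero, Int.emod_zero, zero_mul, sub_zero, zero_add]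
    omega
  have hp' : (0 : ℤ) < p := by exact_mod_cast hp
  have hξ := Int.emod_add_mul_ediv ξ p
  have := Int.emod_lt_of_pos ξ hp'
  interval_cases i
  · simp only [Nat.cast_zero, add_zero, mul_zero, sub_zero, true_and]
    constructor
    · rintro ⟨h₁, h₂⟩
      rw [h₁, h₂, mul_zero, add_zero] at hξ
      exact hξ.symm
    · rintro rfl
      simp
  · constructor
    · rintro ⟨-, h⟩
      omega
    · omega

theorem sum_range_two_ite_mul_ite {p q : ℕ} (ξ₁ ξ₂ : ℤ) (x y : ℂ) :
    ∑ i ∈ range 2, ∑ j ∈ range 2,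
      (if ξ₁ / p + i = 0 ∧ ξ₂ / q + j = 0 then x else 0) *
        (if ξ₁ % p - p * i = 0 ∧ ξ₂ % q - q * j = 0 then y else 0) =
      if ξ₁ = 0 ∧ ξ₂ = 0 then x * y else 0 := by
  have h : ∀ i ∈ range 2, ∀ j ∈ range 2,
      ((ξ₁ / p + i = 0 ∧ ξ₂ / q + j = 0) ∧ ξ₁ % p - p * i = 0 ∧ ξ₂ % q - q * j = 0) ↔
        (i = 0 ∧ ξ₁ = 0) ∧ (j = 0 ∧ ξ₂ = 0) := by
    intro i hi j hj
    rw [mem_range] at hi hj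
    rw [and_and_and_comm, div_add_eq_zero_and_mod_sub_eq_zero_iff hi,
      div_add_eq_zero_and_mod_sub_eq_zero_iff hj]
  simp only [ite_zero_mul_ite_zero]
  rw [sum_congr rfl fun i hi => sum_congr rfl fun j hj => if_congr (h i hi j hj) rfl rfl]
  simp [sum_range_succ]

theorem golay_array_kron_general (L₁ J₁ L₂ J₂ : ℕ) (U₁ Ut₁ U₂ Ut₂ : ℤ → ℤ → ℂ)
    (hsU₁ : ∀ n₁ n₂ : ℤ,
      (n₁ < 0 ∨ (L₁ : ℤ) ≤ n₁ ∨ n₂ < 0 ∨ (J₁ : ℤ) ≤ n₂) → U₁ n₁ n₂ = 0)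
    (hsUt₁ : ∀ n₁ n₂ : ℤ,
      (n₁ < 0 ∨ (L₁ : ℤ) ≤ n₁ ∨ n₂ < 0 ∨ (J₁ : ℤ) ≤ n₂) → Ut₁ n₁ n₂ = 0)
    (hsU₂ : ∀ n₁ n₂ : ℤ,
      (n₁ < 0 ∨ (L₂ : ℤ) ≤ n₁ ∨ n₂ < 0 ∨ (J₂ : ℤ) ≤ n₂) → U₂ n₁ n₂ = 0)
    (hsUt₂ : ∀ n₁ n₂ : ℤ,
      (n₁ < 0 ∨ (L₂ : ℤ) ≤ n₁ ∨ n₂ < 0 ∨ (J₂ : ℤ) ≤ n₂) → Ut₂ n₁ n₂ = 0)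
    (hG₁ : ∀ ξ₁ ξ₂ : ℤ,
      acf2 L₁ J₁ U₁ ξ₁ ξ₂ + acf2 L₁ J₁ Ut₁ ξ₁ ξ₂ =
        if ξ₁ = 0 ∧ ξ₂ = 0 then (2 * L₁ * J₁ : ℂ) else 0)
    (hG₂ : ∀ ξ₁ ξ₂ : ℤ,
      acf2 L₂ J₂ U₂ ξ₁ ξ₂ + acf2 L₂ J₂ Ut₂ ξ₁ ξ₂ =
        if ξ₁ = 0 ∧ ξ₂ = 0 then (2 * L₂ * J₂ : ℂ) else 0) :
    ∀ ξ₁ ξ₂ : ℤ,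
      acf2 (2 * L₁ * L₂) (J₁ * J₂)
          (fun n₁ n₂ => if n₁ < (L₁ * L₂ : ℤ) then kron L₂ J₂ U₁ U₂ n₁ n₂
            else -(kron L₂ J₂ Ut₁
              (fun i j => (starRingEnd ℂ) (Ut₂ ((L₂ : ℤ) - 1 - i) ((J₂ : ℤ) - 1 - j)))
              (n₁ - L₁ * L₂) n₂)) ξ₁ ξ₂ +
        acf2 (2 * L₁ * L₂) (J₁ * J₂)
          (fun n₁ n₂ => if n₁ < (L₁ * L₂ : ℤ) then kron L₂ J₂ U₁ Ut₂ n₁ n₂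
            else kron L₂ J₂ Ut₁
              (fun i j => (starRingEnd ℂ) (U₂ ((L₂ : ℤ) - 1 - i) ((J₂ : ℤ) - 1 - j)))
              (n₁ - L₁ * L₂) n₂) ξ₁ ξ₂ =
      if ξ₁ = 0 ∧ ξ₂ = 0 then (4 * L₁ * L₂ * J₁ * J₂ : ℂ) else 0 := by
  intro ξ₁ ξ₂
  rw [mul_assoc 2 L₁ L₂, ← Nat.cast_mul (α := ℤ)]
  refine (acf2_add_acf2_stackRows_kron hsU₁ hsUt₁ hsU₂ hsUt₂ ξ₁ ξ₂).trans ?_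
  simp only [hG₁, hG₂, sum_range_two_ite_mul_ite]
  congr 1
  ring

/-- Kronecker-product construction of a larger Golay complementary array pair from two
smaller Golay complementary array pairs (Proposition 3). -/
theorem golay_array_kron (L₁ J₁ L₂ J₂ : ℕ) (U₁ Ut₁ U₂ Ut₂ : ℤ → ℤ → ℂ)
    (hsU₁ : ∀ n₁ n₂ : ℤ,
      (n₁ < 0 ∨ (L₁ : ℤ) ≤ n₁ ∨ n₂ < 0 ∨ (J₁ : ℤ) ≤ n₂) → U₁ n₁ n₂ = 0)
    (hsUt₁ : ∀ n₁ n₂ : ℤ,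
      (n₁ < 0 ∨ (L₁ : ℤ) ≤ n₁ ∨ n₂ < 0 ∨ (J₁ : ℤ) ≤ n₂) → Ut₁ n₁ n₂ = 0)
    (hsU₂ : ∀ n₁ n₂ : ℤ,
      (n₁ < 0 ∨ (L₂ : ℤ) ≤ n₁ ∨ n₂ < 0 ∨ (J₂ : ℤ) ≤ n₂) → U₂ n₁ n₂ = 0)
    (hsUt₂ : ∀ n₁ n₂ : ℤ,
      (n₁ < 0 ∨ (L₂ : ℤ) ≤ n₁ ∨ n₂ < 0 ∨ (J₂ : ℤ) ≤ n₂) → Ut₂ n₁ n₂ = 0)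
    (hmU₁ : ∀ n₁ n₂ : ℤ, 0 ≤ n₁ → n₁ < (L₁ : ℤ) → 0 ≤ n₂ → n₂ < (J₁ : ℤ) →
      ‖U₁ n₁ n₂‖ = 1)
    (hmUt₁ : ∀ n₁ n₂ : ℤ, 0 ≤ n₁ → n₁ < (L₁ : ℤ) → 0 ≤ n₂ → n₂ < (J₁ : ℤ) →
      ‖Ut₁ n₁ n₂‖ = 1)
    (hmU₂ : ∀ n₁ n₂ : ℤ, 0 ≤ n₁ → n₁ < (L₂ : ℤ) → 0 ≤ n₂ → n₂ < (J₂ : ℤ) →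
      ‖U₂ n₁ n₂‖ = 1)
    (hmUt₂ : ∀ n₁ n₂ : ℤ, 0 ≤ n₁ → n₁ < (L₂ : ℤ) → 0 ≤ n₂ → n₂ < (J₂ : ℤ) →
      ‖Ut₂ n₁ n₂‖ = 1)
    (hG₁ : ∀ ξ₁ ξ₂ : ℤ,
      acf2 L₁ J₁ U₁ ξ₁ ξ₂ + acf2 L₁ J₁ Ut₁ ξ₁ ξ₂ =
        if ξ₁ = 0 ∧ ξ₂ = 0 then (2 * L₁ * J₁ : ℂ) else 0)
    (hG₂ : ∀ ξ₁ ξ₂ : ℤ,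
      acf2 L₂ J₂ U₂ ξ₁ ξ₂ + acf2 L₂ J₂ Ut₂ ξ₁ ξ₂ =
        if ξ₁ = 0 ∧ ξ₂ = 0 then (2 * L₂ * J₂ : ℂ) else 0) :
    ∀ ξ₁ ξ₂ : ℤ,
      acf2 (2 * L₁ * L₂) (J₁ * J₂)
          (fun n₁ n₂ => if n₁ < (L₁ * L₂ : ℤ) then kron L₂ J₂ U₁ U₂ n₁ n₂
            else -(kron L₂ J₂ Ut₁
              (fun i j => (starRingEnd ℂ) (Ut₂ ((L₂ : ℤ) - 1 - i) ((J₂ : ℤ) - 1 - j)))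
              (n₁ - L₁ * L₂) n₂)) ξ₁ ξ₂ +
        acf2 (2 * L₁ * L₂) (J₁ * J₂)
          (fun n₁ n₂ => if n₁ < (L₁ * L₂ : ℤ) then kron L₂ J₂ U₁ Ut₂ n₁ n₂
            else kron L₂ J₂ Ut₁
              (fun i j => (starRingEnd ℂ) (U₂ ((L₂ : ℤ) - 1 - i) ((J₂ : ℤ) - 1 - j)))
              (n₁ - L₁ * L₂) n₂) ξ₁ ξ₂ =
      if ξ₁ = 0 ∧ ξ₂ = 0 then (4 * L₁ * L₂ * J₁ * J₂ : ℂ) else 0 :=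
  golay_array_kron_general L₁ J₁ L₂ J₂ U₁ Ut₁ U₂ Ut₂ hsU₁ hsUt₁ hsU₂ hsUt₂ hG₁ hG₂
end
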